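/- Let F = RatFunc ℚ with s the generator X, and let W be the Weierstrass curve y² = (x − 4(s−1)²)³ + s²(s+1)²x² over F, with the points P = (4(s−1)², 4s(s+1)(s−1)²) and R = (8 − 8s, 8s² − 8). Then the point 2 • R + P of W over F is an affine point, and its x-coordinate equals 4(s⁴ − 6s³ + 10s² − 2s + 1)/(s − 1)². -/

import Mathlib

open WeierstrassCurve

/-- The generator `s = X` of `ℚ(s) = RatFunc ℚ`. -/
noncomputable def s : RatFunc ℚ := RatFunc.X

/-- The Weierstrass curve `y² = (x − 4(s−1)²)³ + s²(s+1)²x²` over `ℚ(s)`, a Weierstrass model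
of the generic fiber of the elliptic K3 surface `Y → C`. -/
noncomputable def W : WeierstrassCurve.Affine (RatFunc ℚ) where
  a₁ := 0
  a₂ := s ^ 2 * (s + 1) ^ 2 - 12 * (s - 1) ^ 2
  a₃ := 0
  a₄ := 48 * (s - 1) ^ 4
  a₆ := -64 * (s - 1) ^ 6

/-
The tangent to `W` at `R` has the polynomial slope `-s³ + 2s² - 3`, which gives `2R` with
polynomial coordinates; since `x(2R) - x(P) = (s - 1)(s⁵ - 3s⁴ + 4s² - s - 1)`, the chord
through `2R` and `P` has slope `(s⁴ - 3s³ + 2s² + 3s + 1)/(s - 1)`. Both steps are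
nondegenerate because `s` is transcendental over `ℚ`, so `s ± 1` and that quintic do not vanish
in `ℚ(s)`.
-/

namespace WeierstrassCurve.Affine.Point

variable {F : Type*} [Field F] [DecidableEq F] {E : WeierstrassCurve.Affine F}

lemma add_self_eq_some_of_slope {x y ℓ x' y' : F} {h : E.Nonsingular x y}
    (hy : y ≠ E.negY x y) (hℓ : E.slope x x y y = ℓ) (hx' : E.addX x x ℓ = x')
    (hy' : E.addY x x y ℓ = y') :
    ∃ h' : E.Nonsingular x' y', some _ _ h + some _ _ h = some _ _ h' := by
  subst hℓ hx' hy'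
  exact ⟨_, add_self_of_Y_ne hy⟩

lemma add_eq_some_of_slope {x₁ y₁ x₂ y₂ ℓ x' y' : F} {h₁ : E.Nonsingular x₁ y₁}
    {h₂ : E.Nonsingular x₂ y₂} (hx : x₁ ≠ x₂) (hℓ : E.slope x₁ x₂ y₁ y₂ = ℓ)
    (hx' : E.addX x₁ x₂ ℓ = x') (hy' : E.addY x₁ x₂ y₁ ℓ = y') :
    ∃ h' : E.Nonsingular x' y', some _ _ h₁ + some _ _ h₂ = some _ _ h' := by
  subst hℓ hx' hy'
  exact ⟨_, add_of_X_ne hx⟩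

end WeierstrassCurve.Affine.Point

open Polynomial WeierstrassCurve.Affine

lemma s_sub_one_ne_zero : s - 1 ≠ 0 := by
  rw [show s - 1 = algebraMap ℚ[X] (RatFunc ℚ) (X - C 1) by simp [s, RatFunc.algebraMap_X]]
  exact RatFunc.algebraMap_ne_zero (X_sub_C_ne_zero 1)

lemma s_add_one_ne_zero : s + 1 ≠ 0 := by
  rw [show s + 1 = algebraMap ℚ[X] (RatFunc ℚ) (X + C 1) by simp [s, RatFunc.algebraMap_X]]
  exact RatFunc.algebraMap_ne_zero (X_add_C_ne_zero 1)

lemma quintic_ne_zero : s ^ 5 - 3 * s ^ 4 + 4 * s ^ 2 - s - 1 ≠ 0 := by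
  rw [show s ^ 5 - 3 * s ^ 4 + 4 * s ^ 2 - s - 1 =
    algebraMap ℚ[X] (RatFunc ℚ) (X ^ 5 - 3 * X ^ 4 + 4 * X ^ 2 - X - 1) by
      simp [s, RatFunc.algebraMap_X, map_ofNat]]
  exact RatFunc.algebraMap_ne_zero (Monic.ne_zero (by monicity!))

section

open Classical

lemma two_smul_R_eq_some (hR : W.Nonsingular (8 - 8 * s) (8 * s ^ 2 - 8)) :
    ∃ h : W.Nonsingular (s ^ 6 - 4 * s ^ 5 + 3 * s ^ 4 + 4 * s ^ 3 - s ^ 2 - 8 * s + 5)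
      (s ^ 9 - 6 * s ^ 8 + 11 * s ^ 7 + s ^ 6 - 21 * s ^ 5 + 11 * s ^ 4 + 9 * s ^ 3
        - 5 * s ^ 2 - 1),
      2 • Point.some _ _ hR = Point.some _ _ h := by
  have hy : 8 * s ^ 2 - 8 - W.negY (8 - 8 * s) (8 * s ^ 2 - 8) ≠ 0 := by
    have h : 16 * ((s - 1) * (s + 1)) ≠ 0 :=
      mul_ne_zero (by norm_num) (mul_ne_zero s_sub_one_ne_zero s_add_one_ne_zero)
    convert h using 1
    simp only [negY, W]
    ring
  rw [two_smul]
  refine Point.add_self_eq_some_of_slope (ℓ := -s ^ 3 + 2 * s ^ 2 - 3) (sub_ne_zero.mp hy)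
    ?_ ?_ ?_
  · rw [slope_of_Y_ne rfl (sub_ne_zero.mp hy), div_eq_iff hy]
    simp only [negY, W]
    ring
  · simp only [addX, W]
    ring
  · simp only [addY, negAddY, negY, addX, W]
    ring

lemma two_smul_R_add_P_eq_some
    (hP : W.Nonsingular (4 * (s - 1) ^ 2) (4 * s * (s + 1) * (s - 1) ^ 2))
    (hR : W.Nonsingular (8 - 8 * s) (8 * s ^ 2 - 8)) :
    ∃ h : W.Nonsingular (4 * (s ^ 4 - 6 * s ^ 3 + 10 * s ^ 2 - 2 * s + 1) / (s - 1) ^ 2)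
      (4 * s * (s ^ 6 - 6 * s ^ 5 + 9 * s ^ 4 + 4 * s ^ 3 - 9 * s ^ 2 - 14 * s - 1)
        / (s - 1) ^ 3),
      2 • Point.some _ _ hR + Point.some _ _ hP = Point.some _ _ h := by
  obtain ⟨_, h2R⟩ := two_smul_R_eq_some hR
  have hx :
      s ^ 6 - 4 * s ^ 5 + 3 * s ^ 4 + 4 * s ^ 3 - s ^ 2 - 8 * s + 5 - 4 * (s - 1) ^ 2 ≠ 0 := by
    convert mul_ne_zero s_sub_one_ne_zero quintic_ne_zero using 1
    ring
  have hs := s_sub_one_ne_zero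
  rw [h2R]
  refine Point.add_eq_some_of_slope (ℓ := (s ^ 4 - 3 * s ^ 3 + 2 * s ^ 2 + 3 * s + 1) / (s - 1))
    (sub_ne_zero.mp hx) ?_ ?_ ?_
  · rw [slope_of_X_ne (sub_ne_zero.mp hx), div_eq_div_iff hx hs]
    ring
  · simp only [addX, W]
    field_simp
    ring
  · simp only [addY, negAddY, negY, addX, W]
    field_simp
    ring

end

open Classical in
/-- For the points `P = (4(s−1)², 4s(s+1)(s−1)²)` and `R = (8 − 8s, 8s² − 8)` of `W`, the
point `2 • R + P` is an affine point with `x`-coordinate `4(s⁴ − 6s³ + 10s² − 2s + 1)/(s−1)²`. -/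
theorem stmt_10 (hP : W.Nonsingular (4 * (s - 1) ^ 2) (4 * s * (s + 1) * (s - 1) ^ 2))
    (hR : W.Nonsingular (8 - 8 * s) (8 * s ^ 2 - 8)) :
    ∃ (x y : RatFunc ℚ) (h : W.Nonsingular x y),
      2 • WeierstrassCurve.Affine.Point.some _ _ hR + WeierstrassCurve.Affine.Point.some _ _ hP =
        WeierstrassCurve.Affine.Point.some _ _ h ∧
      x = 4 * (s ^ 4 - 6 * s ^ 3 + 10 * s ^ 2 - 2 * s + 1) / (s - 1) ^ 2 := by
  obtain ⟨h, hsum⟩ := two_smul_R_add_P_eq_some hP hR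
  exact ⟨_, _, h, hsum, rfl⟩
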